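/- Let φ be a 3-CNF formula with n variables and m clauses in which every variable occurs both unnegated and negated, and let G(φ) be the graph constructed from φ (triangle gadgets X_i, X̄_i, Y_i for each variable; a clause vertex C_j adjacent to the three vertices for the negations of its literals; an extra vertex z adjacent to all 2n literal vertices). Then for every well-connected set M of G(φ) with 4 ≤ |M| ≤ |V(G(φ))| − 2, and for every index i, M does not contain both literal vertices X_i and X̄_i; consequently M contains at most two vertices of each triangle gadget {X_i, X̄_i, Y_i}. -/

import Mathlib

/-!
The gadget vertex `Yᵢ` has only `Xᵢ` and `X̄ᵢ` as neighbours. Suppose both lie in `M`.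
If `Yᵢ ∈ M`, a path from another vertex of `M` to `Yᵢ` avoiding the rest of `M` enters `Yᵢ`
through `Xᵢ` or `X̄ᵢ`, so it is a single edge; hence `M ⊆ {Xᵢ, X̄ᵢ, Yᵢ}`, against `|M| ≥ 4`.
If `Yᵢ ∉ M`, then `Yᵢ` is isolated in `G - M`, which being connected is just `{Yᵢ}`,
against `|M| ≤ |V| - 2`.
-/

/-- A set `M` of vertices of `G` is *well-connected* if (i) any two distinct
vertices of `M` are joined by a path in `G` avoiding all other vertices of `M`,
and (ii) the subgraph induced by the complement of `M` is connected
(the empty induced subgraph being regarded as connected). -/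
def IsWCS {V : Type*} (G : SimpleGraph V) (M : Set V) : Prop :=
  (∀ u ∈ M, ∀ v ∈ M, u ≠ v →
    ∃ p : G.Walk u v, ∀ w ∈ p.support, w ∈ M → w = u ∨ w = v) ∧
  (G.induce Mᶜ).Preconnected

/-- Vertices of the graph `G(φ)` built from a 3-CNF formula `φ` with `n` variables and
`m` clauses: a literal vertex `lit i b` for each variable `i` and polarity `b`
(`lit i true` is `Xᵢ`, `lit i false` is `X̄ᵢ`), a gadget vertex `gad i = Yᵢ` for each
variable, a clause vertex `cl j = Cⱼ` for each clause, and one extra vertex `z`. -/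
inductive SatVtx (n m : ℕ) where
  | lit : Fin n → Bool → SatVtx n m
  | gad : Fin n → SatVtx n m
  | cl : Fin m → SatVtx n m
  | z : SatVtx n m
deriving DecidableEq

/-- The adjacency-generating relation of `G(φ)`, where the 3-CNF formula is encoded
by `c : Fin m → Fin 3 → Fin n × Bool` giving the three literals of each clause
(`(i, b)` is the literal `xᵢ` if `b = true` and `x̄ᵢ` if `b = false`):
`Xᵢ, X̄ᵢ, Yᵢ` form a triangle; the clause vertex `Cⱼ` is adjacent exactly to the three
literal vertices corresponding to the negations of its literals; and `z` is adjacent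
to all literal vertices. -/
def satRel {n m : ℕ} (c : Fin m → Fin 3 → Fin n × Bool) :
    SatVtx n m → SatVtx n m → Prop
  | .lit i _, .lit i' _ => i = i'
  | .lit i _, .gad i' => i = i'
  | .gad i, .lit i' _ => i = i'
  | .lit i b, .cl j => ∃ k : Fin 3, c j k = (i, !b)
  | .cl j, .lit i b => ∃ k : Fin 3, c j k = (i, !b)
  | .lit _ _, .z => True
  | .z, .lit _ _ => True
  | _, _ => False

/-- The graph `G(φ)` constructed from the 3-CNF formula encoded by `c`. -/
def satGraph {n m : ℕ} (c : Fin m → Fin 3 → Fin n × Bool) : SimpleGraph (SatVtx n m) :=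
  SimpleGraph.fromRel (satRel c)

namespace SimpleGraph

variable {V : Type*} {G : SimpleGraph V}

theorem Preconnected.subset_singleton_of_neighborSet_subset_compl {s : Set V}
    (hs : (G.induce s).Preconnected) {v : V} (hv : v ∈ s) (hN : G.neighborSet v ⊆ sᶜ) :
    s ⊆ {v} := by
  intro u hu
  by_contra huv
  obtain ⟨p⟩ := hs ⟨v, hv⟩ ⟨u, hu⟩
  have hp : ¬ p.Nil := Walk.not_nil_of_ne fun h => huv (congrArg Subtype.val h).symm
  exact hN (p.adj_snd hp) p.snd.2

end SimpleGraph

section WellConnected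

variable {V : Type*} {G : SimpleGraph V} {M : Set V}

theorem IsWCS.subset_insert_neighborSet (hM : IsWCS G M) {v : V} (hv : v ∈ M)
    (hN : G.neighborSet v ⊆ M) : M ⊆ insert v (G.neighborSet v) := by
  intro u hu
  by_cases huv : u = v
  · exact .inl huv
  obtain ⟨p, hp⟩ := hM.1 u hu v hv huv
  have hnil : ¬ p.Nil := SimpleGraph.Walk.not_nil_of_ne huv
  have hadj : G.Adj p.penultimate v := p.adj_penultimate hnil
  rcases hp _ (p.getVert_mem_support _) (hN hadj.symm) with hu | hv'
  · exact .inr (hu ▸ hadj.symm)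
  · exact absurd hv' hadj.ne

theorem IsWCS.compl_subset_singleton (hM : IsWCS G M) {v : V} (hv : v ∉ M)
    (hN : G.neighborSet v ⊆ M) : Mᶜ ⊆ {v} :=
  hM.2.subset_singleton_of_neighborSet_subset_compl hv (by rwa [compl_compl])

end WellConnected

theorem Set.ncard_inter_insert_pair_le_two {α : Type*} {s : Set α} {a b : α}
    (hab : ¬ (a ∈ s ∧ b ∈ s)) (c : α) : (s ∩ {a, b, c}).ncard ≤ 2 := by
  obtain ⟨x, hx⟩ : ∃ x, s ∩ {a, b, c} ⊆ {x, c} := by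
    by_cases ha : a ∈ s
    · refine ⟨a, fun y ⟨hys, hy⟩ => ?_⟩
      rcases hy with rfl | rfl | rfl
      exacts [.inl rfl, absurd ⟨ha, hys⟩ hab, .inr rfl]
    · refine ⟨b, fun y ⟨hys, hy⟩ => ?_⟩
      rcases hy with rfl | rfl | rfl
      exacts [absurd hys ha, .inl rfl, .inr rfl]
  calc (s ∩ {a, b, c}).ncard ≤ ({x, c} : Set α).ncard := Set.ncard_le_ncard hx
    _ ≤ ({c} : Set α).ncard + 1 := Set.ncard_insert_le _ _
    _ = 2 := by rw [Set.ncard_singleton]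

theorem satGraph_neighborSet_gad {n m : ℕ} (c : Fin m → Fin 3 → Fin n × Bool) (i : Fin n) :
    (satGraph c).neighborSet (.gad i) = {.lit i true, .lit i false} := by
  ext v
  cases v with
  | lit i' b => cases b <;> simp [satGraph, satRel, eq_comm]
  | _ => simp [satGraph, satRel]

theorem wcs_triangle_gadget_general {n m : ℕ} (c : Fin m → Fin 3 → Fin n × Bool)
    (M : Set (SatVtx n m)) (hM : IsWCS (satGraph c) M)
    (hlb : 4 ≤ Nat.card M) (hub : Nat.card M + 2 ≤ Nat.card (SatVtx n m))
    (i : Fin n) :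
    ¬ (SatVtx.lit i true ∈ M ∧ SatVtx.lit i false ∈ M) ∧
    Nat.card (M ∩ {SatVtx.lit i true, SatVtx.lit i false, SatVtx.gad i} : Set (SatVtx n m)) ≤ 2 := by
  have hboth : ¬ (SatVtx.lit i true ∈ M ∧ SatVtx.lit i false ∈ M) := by
    rintro ⟨ht, hf⟩
    have hN : (satGraph c).neighborSet (.gad i) ⊆ M := by
      rw [satGraph_neighborSet_gad]
      exact Set.insert_subset ht (Set.singleton_subset_iff.mpr hf)
    have : Finite (SatVtx n m) := Nat.finite_of_card_ne_zero (by omega)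
    rw [Nat.card_coe_set_eq] at hlb hub
    by_cases hg : SatVtx.gad i ∈ M
    · have hsub := hM.subset_insert_neighborSet hg hN
      rw [satGraph_neighborSet_gad] at hsub
      have hM3 := (Set.ncard_le_ncard hsub).trans (Set.ncard_insert_le _ _)
      have hpair := Set.ncard_insert_le (SatVtx.lit i true : SatVtx n m) {.lit i false}
      rw [Set.ncard_singleton] at hpair
      omega
    · have hcover : Set.univ ⊆ M ∪ {SatVtx.gad i} := fun v _ =>
        (em (v ∈ M)).imp id fun hv => hM.compl_subset_singleton hg hN hv
      have hcard := (Set.ncard_le_ncard hcover).trans (Set.ncard_union_le _ _)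
      rw [Set.ncard_univ, Set.ncard_singleton] at hcard
      omega
  exact ⟨hboth, by rw [Nat.card_coe_set_eq]; exact Set.ncard_inter_insert_pair_le_two hboth _⟩

/-- In the graph `G(φ)` built from a 3-CNF formula `φ` (in which every variable occurs
both unnegated and negated), every well-connected set `M` with `4 ≤ |M| ≤ |V(G(φ))| - 2`
contains, for each variable `i`, at most one of the two literal vertices `Xᵢ, X̄ᵢ`;
consequently it contains at most two vertices of the triangle gadget `{Xᵢ, X̄ᵢ, Yᵢ}`. -/
theorem wcs_triangle_gadget {n m : ℕ} (c : Fin m → Fin 3 → Fin n × Bool)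
    (hocc : ∀ (i : Fin n) (b : Bool), ∃ (j : Fin m) (k : Fin 3), c j k = (i, b))
    (M : Set (SatVtx n m)) (hM : IsWCS (satGraph c) M)
    (hlb : 4 ≤ Nat.card M) (hub : Nat.card M + 2 ≤ Nat.card (SatVtx n m))
    (i : Fin n) :
    ¬ (SatVtx.lit i true ∈ M ∧ SatVtx.lit i false ∈ M) ∧
    Nat.card (M ∩ {SatVtx.lit i true, SatVtx.lit i false, SatVtx.gad i} : Set (SatVtx n m)) ≤ 2 :=
  wcs_triangle_gadget_general c M hM hlb hub i
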